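/- If a ∈ L has finite degree n ≥ 2 over K and the subfield K(a) generated by a over K is a proper subset of L, then for any x ∈ L \ K(a), the n-dimensional subspaces A = K(a) and B = span_K(a, a², …, a^{n−1}, x) satisfy: the basis {1, a, …, a^{n−1}} of A cannot be matched to any basis of B; in particular A is not matched to B and L does not have the linear matching property over K. -/

import Mathlib

/-- The family `a : Fin n → L` is a basis of the `K`-subspace `A` of `L`. -/
def IsLinBasis (K : Type*) {L : Type*} [Field K] [DivisionRing L] [Algebra K L]
    {n : ℕ} (a : Fin n → L) (A : Submodule K L) : Prop :=
  LinearIndependent K a ∧ Submodule.span K (Set.range a) = A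

/-- The basis `a` of `A` is matched to the basis `b` of `B`: for every `i` and every
`x ∈ B`, if `a i * x ∈ A` then `x` lies in the span of `{b j : j ≠ i}`. -/
def MatchedBases (K : Type*) {L : Type*} [Field K] [DivisionRing L] [Algebra K L]
    {n : ℕ} (a b : Fin n → L) (A B : Submodule K L) : Prop :=
  ∀ i : Fin n, ∀ x ∈ B, a i * x ∈ A → x ∈ Submodule.span K (b '' {j | j ≠ i})

/-- `A` is matched to `B` if every basis of `A` can be matched to some basis of `B`. -/
def SubspaceMatched (K : Type*) {L : Type*} [Field K] [DivisionRing L] [Algebra K L]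
    (A B : Submodule K L) : Prop :=
  ∀ (n : ℕ) (a : Fin n → L), IsLinBasis K a A →
    ∃ b : Fin n → L, IsLinBasis K b B ∧ MatchedBases K a b A B

/-- `L` has the linear matching property over `K` if for every `n ≥ 1` and all
`n`-dimensional subspaces `A, B` of `L` with `1 ∉ B`, `A` is matched to `B`. -/
def LinearMatchingProperty (K L : Type*) [Field K] [DivisionRing L] [Algebra K L] : Prop :=
  ∀ n : ℕ, 1 ≤ n → ∀ A B : Submodule K L,
    Module.finrank K A = n → Module.finrank K B = n → (1 : L) ∉ B →
      SubspaceMatched K A B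

/-!
Since `a^i · a = a^{i+1} ∈ K(a)` for every `i < n`, a matching of `1, a, …, a^{n-1}` to a basis
`b` of `B ∋ a` would put `a` into the span of `{b_j : j ≠ i}` for every `i`; by linear
independence of `b` the intersection of these spans is `0`, contradicting `a ≠ 0`.
For the failure of the linear matching property one checks that `B` is `n`-dimensional and
avoids `1`: `B` arises from `K(a)` by exchanging `1 = a^0` for `x ∉ K(a)`.
-/

open Submodule Set

section LinearAlgebra

variable {R M : Type*} [Ring R] [AddCommGroup M] [Module R M]

theorem LinearIndependent.eq_zero_of_forall_mem_span_image_ne {ι : Type*} [Nonempty ι]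
    {b : ι → M} (hb : LinearIndependent R b) {v : M}
    (hv : ∀ i, v ∈ span R (b '' {j | j ≠ i})) : v = 0 := by
  choose l hl hlv using fun i => (Finsupp.mem_span_image_iff_linearCombination R).mp (hv i)
  have hl_const : ∀ i j, l i = l j := fun i j =>
    hb.finsuppLinearCombination_injective ((hlv i).trans (hlv j).symm)
  obtain ⟨i₀⟩ := ‹Nonempty ι›
  have hl₀ : l i₀ = 0 := by
    ext j
    rw [hl_const i₀ j]
    exact (Finsupp.mem_supported' R _).mp (hl j) j (by simp)
  rw [← hlv i₀, hl₀, map_zero]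

variable {K V : Type*} [DivisionRing K] [AddCommGroup V] [Module K V]
  {m : ℕ} {u x : V} {t : Fin m → V}

theorem LinearIndependent.finSnoc_of_finCons (h : LinearIndependent K (Fin.cons u t))
    (hx : x ∉ span K (range (Fin.cons u t : Fin (m + 1) → V))) :
    LinearIndependent K (Fin.snoc t x : Fin (m + 1) → V) := by
  rw [Fin.range_cons] at hx
  exact linearIndependent_finSnoc.mpr
    ⟨(linearIndependent_finCons.mp h).1, fun h' => hx (span_mono (subset_insert _ _) h')⟩

theorem notMem_span_range_finSnoc_of_finCons (h : LinearIndependent K (Fin.cons u t))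
    (hx : x ∉ span K (range (Fin.cons u t : Fin (m + 1) → V))) :
    u ∉ span K (range (Fin.snoc t x : Fin (m + 1) → V)) := by
  rw [Fin.range_cons] at hx
  rw [Fin.range_snoc]
  exact fun hu => hx (mem_span_insert_exchange hu (linearIndependent_finCons.mp h).2)

end LinearAlgebra

section Powers

variable {K A : Type*} [Semiring K] [Semiring A] [Module K A]

theorem pow_mem_span_pow_of_le {a : A} {n k : ℕ}
    (hdeg : a ^ n ∈ span K (range fun i : Fin n => a ^ (i : ℕ))) (hk : k ≤ n) :
    a ^ k ∈ span K (range fun i : Fin n => a ^ (i : ℕ)) := by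
  rcases hk.eq_or_lt with rfl | hk
  · exact hdeg
  · exact subset_span ⟨⟨k, hk⟩, rfl⟩

theorem pow_val_eq_finCons (a : A) (m : ℕ) :
    (fun i : Fin (m + 1) => a ^ (i : ℕ)) = Fin.cons 1 fun i : Fin m => a ^ ((i : ℕ) + 1) := by
  funext i
  induction i using Fin.cases <;> simp

theorem ite_pow_eq_finSnoc (a x : A) (m : ℕ) :
    (fun i : Fin (m + 1) => if (i : ℕ) + 1 < m + 1 then a ^ ((i : ℕ) + 1) else x) =
      Fin.snoc (fun i : Fin m => a ^ ((i : ℕ) + 1)) x := by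
  funext i
  induction i using Fin.lastCases <;> simp [Fin.snoc_castSucc]

end Powers

section Matching

variable {K L : Type*} [Field K] [DivisionRing L] [Algebra K L]

theorem MatchedBases.eq_zero_of_forall_mul_mem {n : ℕ} [NeZero n] {a b : Fin n → L}
    {A B : Submodule K L} (h : MatchedBases K a b A B) (hb : LinearIndependent K b) {v : L}
    (hvB : v ∈ B) (hv : ∀ i, a i * v ∈ A) : v = 0 :=
  hb.eq_zero_of_forall_mem_span_image_ne fun i => h i v hvB (hv i)

theorem not_exists_matchedBases_pow {n : ℕ} (hn : 2 ≤ n) {a : L} {B : Submodule K L}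
    (hind : LinearIndependent K (fun i : Fin n => a ^ (i : ℕ)))
    (hdeg : a ^ n ∈ span K (range fun i : Fin n => a ^ (i : ℕ))) (haB : a ∈ B) :
    ¬ ∃ b : Fin n → L, IsLinBasis K b B ∧ MatchedBases K (fun i : Fin n => a ^ (i : ℕ)) b
      (span K (range fun i : Fin n => a ^ (i : ℕ))) B := by
  rintro ⟨b, ⟨hb, -⟩, hmatch⟩
  have : NeZero n := ⟨by omega⟩
  have ha : a ≠ 0 := by simpa using hind.ne_zero ⟨1, by omega⟩
  refine ha (hmatch.eq_zero_of_forall_mul_mem hb haB fun i => ?_)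
  rw [← pow_succ]
  exact pow_mem_span_pow_of_le hdeg (by omega)

end Matching

/-- If `a ∈ L` has finite degree `n ≥ 2` over `K` (so `1, a, …, a^{n-1}` are linearly
independent and `aⁿ ∈ A := K(a) = span (1, a, …, a^{n-1})`), and `K(a) ⊊ L`, witnessed by
`x ∈ L \ K(a)`, then with `B := span (a, a², …, a^{n-1}, x)`, the basis `{1, a, …, a^{n-1}}`
of `A` cannot be matched to any basis of `B`; in particular `A` is not matched to `B` and
`L` does not have the linear matching property over `K`. -/
theorem not_matchable_of_proper_subfield {K L : Type*} [Field K] [DivisionRing L]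
    [Algebra K L] {n : ℕ} (hn : 2 ≤ n) (a x : L) (A B : Submodule K L)
    (hAdef : A = Submodule.span K (Set.range fun i : Fin n => a ^ (i : ℕ)))
    (hBdef : B = Submodule.span K
      (Set.range fun i : Fin n => if (i : ℕ) + 1 < n then a ^ ((i : ℕ) + 1) else x))
    (hind : LinearIndependent K (fun i : Fin n => a ^ (i : ℕ)))
    (hdeg : a ^ n ∈ A) (hx : x ∉ A) :
    (¬ ∃ b : Fin n → L, IsLinBasis K b B ∧
        MatchedBases K (fun i : Fin n => a ^ (i : ℕ)) b A B) ∧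
      ¬ SubspaceMatched K A B ∧ ¬ LinearMatchingProperty K L := by
  subst hAdef hBdef
  have haB : a ∈ span K
      (range fun i : Fin n => if (i : ℕ) + 1 < n then a ^ ((i : ℕ) + 1) else x) :=
    subset_span ⟨⟨0, by omega⟩, by simp [show 1 < n by omega]⟩
  have hnot := not_exists_matchedBases_pow hn hind hdeg haB
  obtain ⟨m, rfl⟩ : ∃ m, n = m + 1 := ⟨n - 1, by omega⟩
  rw [ite_pow_eq_finSnoc] at hnot ⊢
  have hcons := pow_val_eq_finCons a m
  have hind' := hcons ▸ hind
  have hx' := hcons ▸ hx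
  have hBind := hind'.finSnoc_of_finCons hx'
  have h1B := notMem_span_range_finSnoc_of_finCons hind' hx'
  refine ⟨hnot, fun h => hnot (h _ _ ⟨hind, rfl⟩), fun h => hnot ?_⟩
  refine h (m + 1) (by omega) _ _ ?_ ?_ h1B _ _ ⟨hind, rfl⟩
  · rw [finrank_span_eq_card hind, Fintype.card_fin]
  · rw [finrank_span_eq_card hBind, Fintype.card_fin]
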